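/- Let J be a Jordan algebra with unit element e and let x ∈ J with x² = e. Then P(x) is an involutive automorphism of J, i.e., P(x) is an algebra automorphism with P(x)² = Id. -/
import Mathlib


/-- The quadratic representation `P(x) = 2 L(x)^2 - L(x^2)` of a Jordan algebra. -/
def quadRep {J : Type*} [NonUnitalNonAssocRing J] (x y : J) : J :=
  2 • (x * (x * y)) - (x * x) * y

section Aux

variable {F J : Type*} [Field F] [NonUnitalNonAssocRing J] [Module F J]

/-- Cancel a factor of two, using the invertibility of `2` in the base field. -/
lemma quadRepAux_halfc (h2 : (2 : F) ≠ 0) {a b : J} (h : a + a = b + b) : a = b := by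
  have h' : (2 : F) • a = (2 : F) • b := by
    rw [two_smul, two_smul]; exact h
  calc a = ((2 : F)⁻¹ * 2) • a := by rw [inv_mul_cancel₀ h2, one_smul]
    _ = (2 : F)⁻¹ • ((2 : F) • a) := by rw [mul_smul]
    _ = (2 : F)⁻¹ • ((2 : F) • b) := by rw [h']
    _ = ((2 : F)⁻¹ * 2) • b := by rw [mul_smul]
    _ = b := by rw [inv_mul_cancel₀ h2, one_smul]

/-- First linearization of the Jordan identity. -/
lemma quadRepAux_j1 (h2 : (2 : F) ≠ 0)
    (comm : ∀ x y : J, x * y = y * x)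
    (jordan : ∀ x y : J, (x * x) * (y * x) = ((x * x) * y) * x)
    (u z y : J) :
    (u*z)*(y*u) + ((u*z)*(y*u) + (u*u)*(y*z)) =
      ((u*z)*y)*u + (((u*z)*y)*u + ((u*u)*y)*z) := by
  apply quadRepAux_halfc (J := J) h2
  have hp := jordan (u+z) y
  have hm := jordan (u-z) y
  have hz := jordan z y
  simp only [mul_add, add_mul, mul_sub, sub_mul] at hp hm
  rw [comm z u] at hp hm
  linear_combination (norm := abel) hp - hm - hz - hz

/-- Second (full) linearization of the Jordan identity. -/
lemma quadRepAux_j2 (h2 : (2 : F) ≠ 0)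
    (comm : ∀ x y : J, x * y = y * x)
    (jordan : ∀ x y : J, (x * x) * (y * x) = ((x * x) * y) * x)
    (u t z y : J) :
    ((u*z)*y)*t + ((t*z)*y)*u + ((u*t)*y)*z =
      (u*z)*(y*t) + (t*z)*(y*u) + (u*t)*(y*z) := by
  apply quadRepAux_halfc (J := J) h2
  apply quadRepAux_halfc (J := J) h2
  have hp := quadRepAux_j1 h2 comm jordan (u+t) z y
  have hm := quadRepAux_j1 h2 comm jordan (u-t) z y
  simp only [mul_add, add_mul, mul_sub, sub_mul] at hp hm
  rw [comm t u] at hp hm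
  linear_combination (norm := abel) hm - hp

end Aux

/-- In a unital Jordan algebra over a field of characteristic ≠ 2, if `x² = e`
then `P(x)` is an involutive algebra automorphism of `J`. -/
theorem quadRep_involutive_automorphism {F J : Type*} [Field F] [NonUnitalNonAssocRing J]
    [Module F J] [SMulCommClass F J J] [IsScalarTower F J J]
    (h2 : (2 : F) ≠ 0)
    (comm : ∀ x y : J, x * y = y * x)
    (jordan : ∀ x y : J, (x * x) * (y * x) = ((x * x) * y) * x)
    (e : J) (he : ∀ y : J, e * y = y)
    (x : J) (hx : x * x = e) :
    Function.Bijective (quadRep x) ∧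
    (∀ y z : J, quadRep x (y * z) = quadRep x y * quadRep x z) ∧
    (∀ y : J, quadRep x (quadRep x y) = y) := by
  -- normal form for `quadRep x`
  have q : ∀ y : J, quadRep x y = x*(x*y) + x*(x*y) - y := by
    intro y
    rw [quadRep, hx, he, two_smul]
  -- commutation of L(x) with L(x*z)
  have K : ∀ z y : J, x*((x*z)*y) = (x*z)*(x*y) := by
    intro z y
    have h := quadRepAux_j1 (F := F) h2 comm jordan x z y
    simp only [hx, he] at h
    have h' : (x*z)*(y*x) = ((x*z)*y)*x :=
      quadRepAux_halfc (F := F) h2 (by linear_combination (norm := abel) h)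
    calc x*((x*z)*y) = ((x*z)*y)*x := comm _ _
      _ = (x*z)*(y*x) := h'.symm
      _ = (x*z)*(x*y) := by rw [comm y x]
  -- L(x)³ = L(x)
  have L3 : ∀ y : J, x*(x*(x*y)) = x*y := by
    intro y
    have h := quadRepAux_j1 (F := F) h2 comm jordan x y x
    simp only [hx, comm (x*y) e, he] at h
    rw [comm (x*y) x, comm (x*(x*y)) x] at h
    have h' : x*y = x*(x*(x*y)) :=
      quadRepAux_halfc (F := F) h2 (by linear_combination (norm := abel) h)
    exact h'.symm
  -- the key quartic identity
  have E : ∀ y z : J, (x*(x*y))*(x*(x*z)) = (x*y)*(x*z) := by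
    intro y z
    calc (x*(x*y))*(x*(x*z))
        = x*((x*(x*y))*(x*z)) := (K (x*y) (x*z)).symm
      _ = x*((x*z)*(x*(x*y))) := by rw [comm (x*(x*y)) (x*z)]
      _ = x*(x*((x*z)*(x*y))) := by rw [← K z (x*y)]
      _ = x*(x*(x*((x*z)*y))) := by rw [← K z y]
      _ = x*((x*z)*y) := L3 ((x*z)*y)
      _ = (x*z)*(x*y) := K z y
      _ = (x*y)*(x*z) := comm _ _
  -- involutivity
  have inv : ∀ y : J, quadRep x (quadRep x y) = y := by
    intro y
    rw [q y, q (x*(x*y) + x*(x*y) - y)]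
    have L4 := L3 (x*y)
    simp only [mul_add, mul_sub]
    rw [L4]
    abel
  -- multiplicativity
  have mult : ∀ y z : J, quadRep x (y * z) = quadRep x y * quadRep x z := by
    intro y z
    have hN := quadRepAux_j2 (F := F) h2 comm jordan x y z x
    rw [comm (x*z) x, comm ((y*z)*x) x, comm (y*z) x, hx, comm (y*z) e, he,
        comm (x*(x*z)) y, comm (x*z) (x*y), comm (x*y) x] at hN
    -- hN : y*(x*(x*z)) + x*(x*(y*z)) + (x*(x*y))*z
    --        = (x*y)*(x*z) + y*z + (x*y)*(x*z)
    rw [q (y*z), q y, q z]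
    simp only [mul_add, add_mul, mul_sub, sub_mul]
    rw [E y z]
    linear_combination (norm := abel) hN + hN
  exact ⟨Function.Involutive.bijective inv, mult, inv⟩
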